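/- arXiv:2205.08631 — 6 statements merged into one kernel-verified Lean document; each statement's English description precedes it below -/
import Mathlib

section
/- Let r ≥ 1, let ζ ∈ ℂ be a primitive r-th root of unity (ζ^r = 1 and ζ^k ≠ 1 for 1 ≤ k < r), and let A and B be invertible r × r complex matrices satisfying A·B = ζ·(B·A). Then for every eigenvalue μ of B: (i) the eigenvalues of B are exactly the r pairwise-distinct numbers μ, ζμ, ζ²μ, …, ζ^{r−1}μ, and (ii) for each eigenvalue λ of B the eigenspace ker(B − λ·1) has complex dimension exactly 1. -/
/-!
Since `B A⁻¹ = ζ A⁻¹ B`, the map `A⁻¹` sends a `λ`-eigenvector of `B` to a `ζλ`-eigenvector, so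
`μ, ζμ, …, ζ^{r-1}μ` are eigenvalues of `B`; they are distinct because `ζ` is primitive and
`μ ≠ 0` (`B` is invertible). Eigenspaces for distinct eigenvalues are independent, so `r` of them,
each of positive dimension, inside an `r`-dimensional space leave no room for another eigenvalue
and force every one of them to be a line.
-/

open Matrix Module Module.End

theorem iSupIndep.sum_finrank_le {K V ι : Type*} [Field K] [AddCommGroup V] [Module K V]
    [FiniteDimensional K V] [Fintype ι] [DecidableEq ι] {p : ι → Submodule K V}
    (hp : iSupIndep p) : ∑ i, finrank K (p i) ≤ finrank K V := by
  rw [← finrank_directSum]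
  exact LinearMap.finrank_le_finrank_of_injective hp.dfinsupp_lsum_injective

namespace Module.End

variable {R M : Type*} [CommRing R] [AddCommGroup M] [Module R M]

theorem HasEigenvalue.mul_of_mul_eq_smul_mul {f g : End R M} {c μ : R}
    (hfg : f * g = c • (g * f)) (hg : Function.Injective g) (hμ : f.HasEigenvalue μ) :
    f.HasEigenvalue (c * μ) := by
  obtain ⟨v, hv, hv0⟩ := hμ.exists_hasEigenvector
  refine hasEigenvalue_of_hasEigenvector (x := g v) ⟨mem_eigenspace_iff.mpr ?_, ?_⟩
  · calc f (g v) = c • g (f v) := congr($hfg v)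
      _ = (c * μ) • g v := by rw [mem_eigenspace_iff.mp hv, map_smul, smul_smul]
  · exact (map_ne_zero_iff g hg).mpr hv0

theorem HasEigenvalue.pow_mul_of_mul_eq_smul_mul {f g : End R M} {c μ : R}
    (hfg : f * g = c • (g * f)) (hg : Function.Injective g) (hμ : f.HasEigenvalue μ) (k : ℕ) :
    f.HasEigenvalue (c ^ k * μ) := by
  induction k with
  | zero => simpa using hμ
  | succ k ih => simpa [pow_succ', mul_assoc] using ih.mul_of_mul_eq_smul_mul hfg hg

theorem HasEigenvalue.ne_zero_of_injective {f : End R M} {μ : R} (hμ : f.HasEigenvalue μ)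
    (hf : Function.Injective f) : μ ≠ 0 := by
  rintro rfl
  exact hasEigenvalue_iff.mp hμ (by rw [eigenspace_zero, LinearMap.ker_eq_bot.mpr hf])

section FiniteDimensional

variable {K V ι : Type*} [Field K] [AddCommGroup V] [Module K V] [FiniteDimensional K V]
  [Fintype ι] {f : End K V} {e : ι → K}

theorem HasEigenvalue.one_le_finrank_eigenspace {μ : K} (hμ : f.HasEigenvalue μ) :
    1 ≤ finrank K (f.eigenspace μ) :=
  pos_finrank_genEigenspace_of_hasEigenvalue hμ one_pos

theorem card_le_finrank_of_hasEigenvalue (he : Function.Injective e)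
    (hf : ∀ i, f.HasEigenvalue (e i)) : Fintype.card ι ≤ finrank K V := by
  classical
  calc Fintype.card ι = ∑ _i : ι, 1 := by simp
    _ ≤ ∑ i, finrank K (f.eigenspace (e i)) :=
        Finset.sum_le_sum fun i _ => (hf i).one_le_finrank_eigenspace
    _ ≤ finrank K V := ((eigenspaces_iSupIndep f).comp he).sum_finrank_le

theorem HasEigenvalue.mem_range_of_card_eq_finrank (he : Function.Injective e)
    (hf : ∀ i, f.HasEigenvalue (e i)) (hcard : Fintype.card ι = finrank K V) {μ : K}
    (hμ : f.HasEigenvalue μ) : μ ∈ Set.range e := by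
  by_contra hμe
  have hinj : Function.Injective (fun o : Option ι => o.elim μ e) := by
    rintro (_ | i) (_ | j) h
    exacts [rfl, (hμe ⟨j, h.symm⟩).elim, (hμe ⟨i, h⟩).elim, congrArg _ (he h)]
  have := card_le_finrank_of_hasEigenvalue hinj (by rintro (_ | i); exacts [hμ, hf i])
  simp only [Fintype.card_option] at this
  omega

theorem finrank_eigenspace_eq_one_of_card_eq_finrank (he : Function.Injective e)
    (hf : ∀ i, f.HasEigenvalue (e i)) (hcard : Fintype.card ι = finrank K V) (i : ι) :
    finrank K (f.eigenspace (e i)) = 1 := by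
  classical
  have hge : ∀ i ∈ Finset.univ, 1 ≤ finrank K (f.eigenspace (e i)) :=
    fun i _ => (hf i).one_le_finrank_eigenspace
  have hle : ∑ i, finrank K (f.eigenspace (e i)) ≤ ∑ _i : ι, 1 := by
    simpa [hcard] using ((eigenspaces_iSupIndep f).comp he).sum_finrank_le
  exact ((Finset.sum_eq_sum_iff_of_le hge).mp ((Finset.sum_le_sum hge).antisymm hle) i
    (Finset.mem_univ i)).symm

end FiniteDimensional

end Module.End

namespace Matrix

variable {n R : Type*} [Fintype n] [DecidableEq n] [CommRing R]

theorem mul_inv_eq_smul_inv_mul {A B : Matrix n n R} {c : R} (hA : IsUnit A)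
    (h : A * B = c • (B * A)) : B * A⁻¹ = c • (A⁻¹ * B) := by
  have hA' : IsUnit A.det := (isUnit_iff_isUnit_det A).mp hA
  calc B * A⁻¹ = A⁻¹ * (A * B) * A⁻¹ := by
        rw [← Matrix.mul_assoc, nonsing_inv_mul A hA', Matrix.one_mul]
    _ = c • (A⁻¹ * B * (A * A⁻¹)) := by
      rw [h, Matrix.mul_smul, Matrix.smul_mul]; simp only [Matrix.mul_assoc]
    _ = c • (A⁻¹ * B) := by rw [mul_nonsing_inv A hA', Matrix.mul_one]

theorem injective_toLin'_of_isUnit {M : Matrix n n R} (hM : IsUnit M) :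
    Function.Injective (toLin' M) :=
  ((isUnit_iff _).mp (isUnit_toLin'_iff.mpr hM)).injective

theorem hasEigenvalue_toLin'_iff {B : Matrix n n R} {μ : R} :
    HasEigenvalue (toLin' B) μ ↔ ∃ v : n → R, v ≠ 0 ∧ B *ᵥ v = μ • v := by
  simp only [hasEigenvalue_iff, Submodule.ne_bot_iff, mem_eigenspace_iff, toLin'_apply, and_comm]

theorem ker_mulVecLin_sub_smul_id (B : Matrix n n R) (μ : R) :
    LinearMap.ker (B.mulVecLin - μ • LinearMap.id) = eigenspace (toLin' B) μ := by
  rw [eigenspace_def, one_eq_id, toLin'_apply']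

end Matrix

/-- Let `ζ` be a primitive `r`-th root of unity and `A`, `B` invertible
`r × r` complex matrices with `A·B = ζ·(B·A)`.  Then for every eigenvalue `μ` of `B`:
(i) the eigenvalues of `B` are exactly the `r` pairwise-distinct numbers
`μ, ζμ, …, ζ^{r-1}μ`, and (ii) every eigenspace of `B` has complex dimension exactly `1`. -/
theorem stmt_2 (r : ℕ) (hr : 1 ≤ r) (ζ : ℂ) (hζr : ζ ^ r = 1)
    (hζprim : ∀ k : ℕ, 1 ≤ k → k < r → ζ ^ k ≠ 1)
    (A B : Matrix (Fin r) (Fin r) ℂ) (hA : IsUnit A) (hB : IsUnit B)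
    (hcomm : A * B = ζ • (B * A))
    (μ : ℂ) (hμ : ∃ v : Fin r → ℂ, v ≠ 0 ∧ B.mulVec v = μ • v) :
    (∀ lam : ℂ, (∃ v : Fin r → ℂ, v ≠ 0 ∧ B.mulVec v = lam • v) ↔
      ∃ k : Fin r, lam = ζ ^ (k : ℕ) * μ) ∧
    Function.Injective (fun k : Fin r => ζ ^ (k : ℕ) * μ) ∧
    (∀ lam : ℂ, (∃ v : Fin r → ℂ, v ≠ 0 ∧ B.mulVec v = lam • v) →
      Module.finrank ℂ
        (LinearMap.ker (B.mulVecLin - lam • (LinearMap.id : (Fin r → ℂ) →ₗ[ℂ] Fin r → ℂ))) = 1) := by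
  have hζ : IsPrimitiveRoot ζ r := .mk_of_lt ζ hr hζr hζprim
  simp only [← hasEigenvalue_toLin'_iff] at hμ ⊢
  have hμ0 : μ ≠ 0 := hμ.ne_zero_of_injective (injective_toLin'_of_isUnit hB)
  have horbit (k : ℕ) : HasEigenvalue (toLin' B) (ζ ^ k * μ) := by
    refine hμ.pow_mul_of_mul_eq_smul_mul ?_
      (injective_toLin'_of_isUnit (isUnit_nonsing_inv_iff.mpr hA)) k
    rw [mul_eq_comp, mul_eq_comp, ← toLin'_mul, ← toLin'_mul, mul_inv_eq_smul_inv_mul hA hcomm,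
      map_smul]
  have hinj : Function.Injective (fun k : Fin r => ζ ^ (k : ℕ) * μ) :=
    fun i j h => Fin.ext (hζ.pow_inj i.2 j.2 (mul_right_cancel₀ hμ0 h))
  have hcard : Fintype.card (Fin r) = Module.finrank ℂ (Fin r → ℂ) := by simp
  have hrange (lam : ℂ) (hlam : HasEigenvalue (toLin' B) lam) :
      ∃ k : Fin r, lam = ζ ^ (k : ℕ) * μ :=
    (hlam.mem_range_of_card_eq_finrank hinj (fun k => horbit k) hcard).imp fun _ => Eq.symm
  refine ⟨fun lam => ⟨hrange lam, ?_⟩, hinj, fun lam hlam => ?_⟩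
  · rintro ⟨k, rfl⟩
    exact horbit k
  · obtain ⟨k, rfl⟩ := hrange lam hlam
    rw [ker_mulVecLin_sub_smul_id]
    exact finrank_eigenspace_eq_one_of_card_eq_finrank hinj (fun k => horbit k) hcard k
end

section
/- Let r ≥ 1, let ζ ∈ ℂ be a primitive r-th root of unity (ζ^r = 1 and ζ^k ≠ 1 for 1 ≤ k < r), and let A and B be invertible r × r complex matrices satisfying A·B = ζ·(B·A). Then any r × r complex matrix M that commutes with both A and B (M·A = A·M and M·B = B·M) is a scalar multiple of the identity: M = c·1 for some c ∈ ℂ. -/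
/-!
Any eigenspace of `M` is invariant under `A` and `B`, so it suffices that `A` and `B` have no
common invariant subspace other than `0` and `ℂ^r`. A nonzero invariant subspace `W` contains an
eigenvector `v` of `A`, with eigenvalue `λ ≠ 0`; since `A B^k = ζ^k B^k A`, the vectors `B^k v`
(`0 ≤ k < r`) lie in `W` and are eigenvectors of `A` for the `r` distinct eigenvalues `ζ^k λ`,
hence they are linearly independent and `W` is everything.
-/

open Matrix Module Set

theorem mul_pow_eq_smul_pow_mul {S R : Type*} [CommSemiring S] [Semiring R] [Algebra S R]
    {ζ : S} {a b : R} (hab : a * b = ζ • (b * a)) (k : ℕ) :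
    a * b ^ k = ζ ^ k • (b ^ k * a) := by
  induction k with
  | zero => simp
  | succ k ih =>
    calc a * b ^ (k + 1) = ζ ^ k • (b ^ k * (a * b)) := by
          rw [pow_succ, ← mul_assoc, ih, smul_mul_assoc, mul_assoc]
      _ = ζ ^ (k + 1) • (b ^ (k + 1) * a) := by
          rw [hab, mul_smul_comm, smul_smul, ← mul_assoc, ← pow_succ, ← pow_succ]

namespace Module.End

variable {K V : Type*} [Field K] [AddCommGroup V] [Module K V]

theorem HasEigenvector.pow_apply_of_mul_eq_smul_mul {f g : End K V} {ζ μ : K} {v : V}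
    (hv : f.HasEigenvector μ v) (hg : Function.Injective g) (hfg : f * g = ζ • (g * f))
    (k : ℕ) : f.HasEigenvector (ζ ^ k * μ) ((g ^ k) v) := by
  refine ⟨mem_eigenspace_iff.2 ?_, ?_⟩
  · rw [← mul_apply, mul_pow_eq_smul_pow_mul hfg, LinearMap.smul_apply, mul_apply,
      hv.apply_eq_smul, map_smul, smul_smul]
  · rw [Ne, ← map_zero (g ^ k)]
    exact (coe_pow g k ▸ hg.iterate k).ne hv.2

variable [IsAlgClosed K] [FiniteDimensional K V]

theorem exists_hasEigenvector_mem_of_mapsTo {f : End K V} {W : Submodule K V} (hW : W ≠ ⊥)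
    (hfW : MapsTo f W W) : ∃ μ v, v ∈ W ∧ f.HasEigenvector μ v := by
  have := Submodule.nontrivial_iff_ne_bot.2 hW
  obtain ⟨μ, hμ⟩ := exists_eigenvalue (f.restrict fun _ hx ↦ hfW hx)
  obtain ⟨⟨v, hvW⟩, hv⟩ := hμ.exists_hasEigenvector
  exact ⟨μ, v, hvW,
    mem_eigenspace_iff.2 (congrArg Subtype.val hv.apply_eq_smul), by simpa using hv.2⟩

theorem eq_top_of_mapsTo_of_mul_eq_smul_mul {ζ : K} (hζ : IsPrimitiveRoot ζ (finrank K V))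
    {f g : End K V} (hf : Function.Injective f) (hg : Function.Injective g)
    (hfg : f * g = ζ • (g * f)) {W : Submodule K V} (hW : W ≠ ⊥)
    (hfW : MapsTo f W W) (hgW : MapsTo g W W) : W = ⊤ := by
  obtain ⟨μ, v, hvW, hv⟩ := exists_hasEigenvector_mem_of_mapsTo hW hfW
  have hμ : μ ≠ 0 := by
    rintro rfl
    exact hv.2 (hf (by rw [hv.apply_eq_smul, zero_smul, map_zero]))
  let w : Fin (finrank K V) → W := fun k ↦ ⟨(g ^ (k : ℕ)) v, coe_pow g k ▸ hgW.iterate k hvW⟩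
  have hw : LinearIndependent K w := by
    refine LinearIndependent.of_comp W.subtype
      (eigenvectors_linearIndependent' f (fun k : Fin (finrank K V) ↦ ζ ^ (k : ℕ) * μ) ?_ _
        fun k ↦ hv.pow_apply_of_mul_eq_smul_mul hg hfg k)
    exact fun i j hij ↦ Fin.ext (hζ.pow_inj i.2 j.2 (mul_right_cancel₀ hμ hij))
  refine Submodule.eq_top_of_finrank_eq (le_antisymm (Submodule.finrank_le W) ?_)
  simpa using hw.fintype_card_le_finrank

theorem exists_eq_smul_one_of_commute_of_mul_eq_smul_mul [Nontrivial V] {ζ : K}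
    (hζ : IsPrimitiveRoot ζ (finrank K V)) {f g h : End K V} (hf : Function.Injective f)
    (hg : Function.Injective g) (hfg : f * g = ζ • (g * f)) (hhf : Commute h f)
    (hhg : Commute h g) : ∃ c : K, h = c • 1 := by
  obtain ⟨c, hc⟩ := h.exists_eigenvalue
  have htop := eq_top_of_mapsTo_of_mul_eq_smul_mul hζ hf hg hfg hc
    (mapsTo_genEigenspace_of_comm hhf c 1) (mapsTo_genEigenspace_of_comm hhg c 1)
  refine ⟨c, LinearMap.ext fun x ↦ ?_⟩
  simpa using mem_eigenspace_iff.1 (eq_top_iff.1 htop Submodule.mem_top : x ∈ h.eigenspace c)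

end Module.End

/-- Let `ζ` be a primitive `r`-th root of unity and `A`, `B` invertible
`r × r` complex matrices with `A·B = ζ·(B·A)`.  Then any matrix `M` commuting with both
`A` and `B` is a scalar multiple of the identity. -/
theorem stmt_3 (r : ℕ) (hr : 1 ≤ r) (ζ : ℂ) (hζr : ζ ^ r = 1)
    (hζprim : ∀ k : ℕ, 1 ≤ k → k < r → ζ ^ k ≠ 1)
    (A B : Matrix (Fin r) (Fin r) ℂ) (hA : IsUnit A) (hB : IsUnit B)
    (hcomm : A * B = ζ • (B * A))
    (M : Matrix (Fin r) (Fin r) ℂ) (hMA : M * A = A * M) (hMB : M * B = B * M) :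
    ∃ c : ℂ, M = c • (1 : Matrix (Fin r) (Fin r) ℂ) := by
  have hζ : IsPrimitiveRoot ζ (finrank ℂ (Fin r → ℂ)) := by
    rw [finrank_fin_fun]
    exact .mk_of_lt ζ hr hζr hζprim
  have : NeZero r := ⟨by omega⟩
  let e : Matrix (Fin r) (Fin r) ℂ ≃ₐ[ℂ] End ℂ (Fin r → ℂ) := toLinAlgEquiv'
  obtain ⟨c, hc⟩ := End.exists_eq_smul_one_of_commute_of_mul_eq_smul_mul hζ
    (f := e A) (g := e B) (mulVec_injective_iff_isUnit.2 hA) (mulVec_injective_iff_isUnit.2 hB)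
    (by rw [← map_mul, hcomm, map_smul, map_mul]) (Commute.map hMA e) (Commute.map hMB e)
  exact ⟨c, e.injective <| by rwa [map_smul, map_one]⟩
end

section
/- Let r ≥ 1, let ζ ∈ ℂ be a primitive r-th root of unity (ζ^r = 1 and ζ^k ≠ 1 for 1 ≤ k < r), and let A and B be invertible r × r complex matrices satisfying A·B = ζ·(B·A). Then the r-th powers of A and B are scalar matrices: there exist a, b ∈ ℂ with A^r = a·1 and B^r = b·1. -/
/-! Conjugation by `B` resp. `A` sends `A` to `ζ • A` resp. `B` to `ζ • B`, so the characteristic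
polynomial `p` of either matrix equals that of its `ζ`-multiple. Since
`charpoly (ζ • M) (ζ X) = ζ ^ r * charpoly M (X)` and `ζ ^ r = 1`, this says `p (ζ X) = p X`, which
forces the coefficients of `X ^ k` to vanish for `0 < k < r`. Hence `p = X ^ r + p 0`, and
Cayley–Hamilton gives `M ^ r = -p 0 • 1`. -/

open Matrix Polynomial

namespace Matrix

variable {n R : Type*} [Fintype n] [DecidableEq n] [CommRing R]

theorem charpoly_smul_comp_C_mul_X (c : R) (M : Matrix n n R) :
    (c • M).charpoly.comp (C c * X) = C c ^ Fintype.card n * M.charpoly := by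
  have hcharmatrix : (compRingHom (C c * X)).mapMatrix (c • M).charmatrix = C c • M.charmatrix := by
    ext i j
    by_cases h : i = j <;> simp [h, mul_sub, C_mul]
  calc (c • M).charpoly.comp (C c * X) = compRingHom (C c * X) (c • M).charmatrix.det := rfl
    _ = (C c • M.charmatrix).det := by rw [RingHom.map_det, hcharmatrix]
    _ = C c ^ Fintype.card n * M.charpoly := det_smul _ _

theorem charpoly_smul_eq_of_mul_eq_smul_mul {ζ : R} {M N : Matrix n n R} (hN : IsUnit N)
    (h : N * M = ζ • (M * N)) : (ζ • M).charpoly = M.charpoly := by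
  have hNdet := (isUnit_iff_isUnit_det N).mp hN
  have hconj : ζ • M = hN.unit.val * M * hN.unit.val⁻¹ := by
    rw [IsUnit.unit_spec, h, smul_mul, mul_nonsing_inv_cancel_right _ _ hNdet]
  rw [hconj, charpoly_units_conj]

variable [IsDomain R]

theorem charpoly_eq_X_pow_add_C_of_charpoly_smul_eq [Nonempty n] {ζ : R}
    (hζ : IsPrimitiveRoot ζ (Fintype.card n)) {M : Matrix n n R}
    (hM : (ζ • M).charpoly = M.charpoly) :
    M.charpoly = X ^ Fintype.card n + C (M.charpoly.coeff 0) := by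
  have hcomp : M.charpoly.comp (C ζ * X) = M.charpoly := by
    rw [← hM, charpoly_smul_comp_C_mul_X, ← C_pow, hζ.pow_eq_one, C_1, one_mul, hM]
  have hcoeff : ∀ k, k ≠ 0 → k < Fintype.card n → M.charpoly.coeff k = 0 := by
    intro k hk0 hkd
    have hk := congrArg (coeff · k) hcomp
    simp only [comp_C_mul_X_coeff] at hk
    have hmul : M.charpoly.coeff k * (ζ ^ k - 1) = 0 := by rw [mul_sub, mul_one, hk, sub_self]
    exact (mul_eq_zero.mp hmul).resolve_right (sub_ne_zero.mpr (hζ.pow_ne_one_of_pos_of_lt hk0 hkd))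
  have hd : Fintype.card n ≠ 0 := Fintype.card_ne_zero
  ext k
  rw [coeff_add, coeff_X_pow, coeff_C]
  rcases lt_trichotomy k (Fintype.card n) with hk | rfl | hk
  · rcases eq_or_ne k 0 with rfl | hk0
    · simp [hd.symm]
    · simp [hk.ne, hk0, hcoeff k hk0 hk]
  · simpa [hd, charpoly_natDegree_eq_dim] using (charpoly_monic M).coeff_natDegree
  · have hk0 : k ≠ 0 := by omega
    simp [hk.ne', hk0,
      coeff_eq_zero_of_natDegree_lt (by rwa [charpoly_natDegree_eq_dim] : M.charpoly.natDegree < k)]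

theorem exists_pow_card_eq_smul_one_of_charpoly_smul_eq {ζ : R}
    (hζ : IsPrimitiveRoot ζ (Fintype.card n)) {M : Matrix n n R}
    (hM : (ζ • M).charpoly = M.charpoly) : ∃ a : R, M ^ Fintype.card n = a • 1 := by
  cases isEmpty_or_nonempty n
  · exact ⟨0, Subsingleton.elim _ _⟩
  refine ⟨-M.charpoly.coeff 0, ?_⟩
  have hCayleyHamilton := aeval_self_charpoly M
  rw [charpoly_eq_X_pow_add_C_of_charpoly_smul_eq hζ hM] at hCayleyHamilton
  simp only [map_add, map_pow, aeval_X, aeval_C, Algebra.algebraMap_eq_smul_one] at hCayleyHamilton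
  rw [neg_smul, eq_neg_iff_add_eq_zero, hCayleyHamilton]

end Matrix

/-- Let `ζ` be a primitive `r`-th root of unity and `A`, `B` invertible
`r × r` complex matrices with `A·B = ζ·(B·A)`.  Then `A ^ r` and `B ^ r` are scalar
matrices. -/
theorem stmt_5 (r : ℕ) (hr : 1 ≤ r) (ζ : ℂ) (hζr : ζ ^ r = 1)
    (hζprim : ∀ k : ℕ, 1 ≤ k → k < r → ζ ^ k ≠ 1)
    (A B : Matrix (Fin r) (Fin r) ℂ) (hA : IsUnit A) (hB : IsUnit B)
    (hcomm : A * B = ζ • (B * A)) :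
    ∃ a b : ℂ, A ^ r = a • (1 : Matrix (Fin r) (Fin r) ℂ) ∧
      B ^ r = b • (1 : Matrix (Fin r) (Fin r) ℂ) := by
  have hζ : IsPrimitiveRoot ζ (Fintype.card (Fin r)) := by
    rw [Fintype.card_fin]
    exact .mk_of_lt ζ hr hζr hζprim
  have hBdet := (isUnit_iff_isUnit_det B).mp hB
  have hcomm' : B⁻¹ * A = ζ • (A * B⁻¹) :=
    calc B⁻¹ * A = B⁻¹ * (A * B) * B⁻¹ := by
          rw [← Matrix.mul_assoc, mul_nonsing_inv_cancel_right _ _ hBdet]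
      _ = ζ • (A * B⁻¹) := by
          rw [hcomm, Matrix.mul_smul, Matrix.smul_mul, nonsing_inv_mul_cancel_left _ _ hBdet]
  obtain ⟨a, ha⟩ := exists_pow_card_eq_smul_one_of_charpoly_smul_eq hζ
    (charpoly_smul_eq_of_mul_eq_smul_mul (isUnit_nonsing_inv_iff.mpr hB) hcomm')
  obtain ⟨b, hb⟩ := exists_pow_card_eq_smul_one_of_charpoly_smul_eq hζ
    (charpoly_smul_eq_of_mul_eq_smul_mul hA hcomm)
  rw [Fintype.card_fin] at ha hb
  exact ⟨a, b, ha, hb⟩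
end

section
/- Let r ≥ 1 and let ζ ∈ ℂ be a primitive r-th root of unity (ζ^r = 1 and ζ^k ≠ 1 for 1 ≤ k < r). Suppose A, B, A′, B′ are r × r unitary complex matrices satisfying A·B = ζ·(B·A) and A′·B′ = ζ·(B′·A′), and suppose det A = det A′ and det B = det B′. Then the pairs are simultaneously unitarily conjugate: there exists an r × r unitary matrix U with A′ = U·A·U⁻¹ and B′ = U·B·U⁻¹. -/
/-!
Let `v` be a unit eigenvector of `A`, with eigenvalue `μ`. The relation `A B = ζ B A` makes
`B ^ k v` an eigenvector of `A` with eigenvalue `ζ ^ k μ`. These are `r` distinct eigenvalues of a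
unitary matrix, so `v, B v, …, B ^ (r - 1) v` is an orthonormal basis, in which `A` is the clock
matrix `diag (ζ ^ k μ)` and `B` is the cyclic shift twisted by `c = ⟪v, B ^ r v⟫`. Hence
`det A = (∏ ζ ^ k) μ ^ r` and `det B = ± c`. Equal determinants of `A` and `A'` give
`μ ^ r = μ' ^ r`, so `μ = ζ ^ i μ'` and `B' ^ i v'` is an eigenvector of `A'` with eigenvalue `μ`.
With these choices the two clock matrices agree, equal determinants of `B` and `B'` make the
twists agree, and the unitary matrix sending one basis to the other conjugates `(A, B)` to
`(A', B')`.
-/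

open Matrix

lemma IsPrimitiveRoot.exists_pow_mul_eq_of_pow_eq_pow {K : Type*} [Field K] {ζ x y : K} {k : ℕ}
    [NeZero k] (hζ : IsPrimitiveRoot ζ k) (hy : y ≠ 0) (hxy : x ^ k = y ^ k) :
    ∃ i, ζ ^ i * y = x := by
  obtain ⟨i, -, hi⟩ := hζ.eq_pow_of_pow_eq_one (ξ := x / y) (by
    rw [div_pow, hxy, div_self (pow_ne_zero _ hy)])
  exact ⟨i, by rw [hi, div_mul_cancel₀ _ hy]⟩

lemma pow_val_finRotate {M : Type*} [Monoid M] {ζ : M} {n : ℕ} (hζ : ζ ^ (n + 1) = 1)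
    (k : Fin (n + 1)) : ζ ^ (finRotate (n + 1) k : ℕ) = ζ ^ ((k : ℕ) + 1) := by
  rw [coe_finRotate]
  split_ifs with hk
  · rw [hk, Fin.val_last, hζ, pow_zero]
  · rfl

namespace WeylPair

section Unitary

variable {m α : Type*} [Fintype m] [DecidableEq m] [CommRing α] [StarRing α]

lemma star_mulVec_dotProduct_mulVec {M : Matrix m m α} (hM : M ∈ unitaryGroup m α)
    (x y : m → α) : star (M *ᵥ x) ⬝ᵥ (M *ᵥ y) = star x ⬝ᵥ y := by
  rw [star_mulVec, dotProduct_mulVec, vecMul_vecMul, ← star_eq_conjTranspose,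
    mem_unitaryGroup_iff'.mp hM, vecMul_one]

lemma ne_zero_of_mulVec_eq_smul {M : Matrix m m α} (hM : M ∈ unitaryGroup m α) {μ : α}
    {v : m → α} (hv : M *ᵥ v = μ • v) (hv0 : v ≠ 0) : μ ≠ 0 := by
  rintro rfl
  apply hv0
  rw [← one_mulVec v, ← mem_unitaryGroup_iff'.mp hM, ← mulVec_mulVec, hv, zero_smul,
    mulVec_zero]

lemma det_conjTranspose_mul_mul {P : Matrix m m α} (hP : P ∈ unitaryGroup m α)
    (M : Matrix m m α) : (Pᴴ * M * P).det = M.det := by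
  rw [det_mul, det_mul, mul_right_comm, ← det_mul, ← star_eq_conjTranspose,
    mem_unitaryGroup_iff'.mp hP, det_one, one_mul]

lemma eq_mul_mul_inv_of_conjTranspose_mul_mul_eq {P Q X Y : Matrix m m α}
    (hP : P ∈ unitaryGroup m α) (hQ : Q ∈ unitaryGroup m α) (h : Pᴴ * X * P = Qᴴ * Y * Q) :
    Y = Q * Pᴴ * X * (Q * Pᴴ)⁻¹ := by
  have hP' : Pᴴ * P = 1 := mem_unitaryGroup_iff'.mp hP
  have hQ' : Q * Qᴴ = 1 := mem_unitaryGroup_iff.mp hQ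
  rw [inv_eq_right_inv (B := P * Qᴴ) (by
    rw [Matrix.mul_assoc, ← Matrix.mul_assoc Pᴴ, hP', Matrix.one_mul, hQ'])]
  calc Y = Q * (Qᴴ * Y * Q) * Qᴴ := by
        simp only [← Matrix.mul_assoc, hQ', Matrix.one_mul]
        rw [Matrix.mul_assoc, hQ', Matrix.mul_one]
    _ = Q * Pᴴ * X * (P * Qᴴ) := by rw [← h]; simp only [Matrix.mul_assoc]

open scoped ComplexOrder in
lemma star_dotProduct_eq_zero_of_eigenvalue_ne {𝕜 : Type*} [RCLike 𝕜] {M : Matrix m m 𝕜}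
    (hM : M ∈ unitaryGroup m 𝕜) {a b : 𝕜} {x y : m → 𝕜} (hx : M *ᵥ x = a • x)
    (hy : M *ᵥ y = b • y) (hab : a ≠ b) : star x ⬝ᵥ y = 0 := by
  by_contra hxy
  have hxx : star x ⬝ᵥ x ≠ 0 := by
    rw [Ne, dotProduct_star_self_eq_zero]
    rintro rfl
    simp at hxy
  have star_mul_eq_one {c : 𝕜} {z : m → 𝕜} (hz : M *ᵥ z = c • z) (h : star x ⬝ᵥ z ≠ 0) :
      star a * c = 1 := by
    have := star_mulVec_dotProduct_mulVec hM x z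
    rw [hx, hz, star_smul, smul_dotProduct, dotProduct_smul, smul_smul, smul_eq_mul] at this
    exact mul_right_cancel₀ h (this.trans (one_mul _).symm)
  have haa := star_mul_eq_one hx hxx
  exact hab (mul_left_cancel₀ (left_ne_zero_of_mul_eq_one haa)
    (haa.trans (star_mul_eq_one hy hxy).symm))

end Unitary

open scoped ComplexOrder in
lemma exists_eigenvector_star_dotProduct_self_eq_one {m : Type*} [Fintype m] [Nonempty m]
    (M : Matrix m m ℂ) : ∃ (μ : ℂ) (v : m → ℂ), M *ᵥ v = μ • v ∧ star v ⬝ᵥ v = 1 := by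
  obtain ⟨μ, hμ⟩ := Module.End.exists_eigenvalue M.mulVecLin
  obtain ⟨v, hv, hv0⟩ := hμ.exists_hasEigenvector
  have hpos : 0 < star v ⬝ᵥ v := dotProduct_star_self_pos_iff.mpr hv0
  obtain ⟨s, hs0, hs⟩ : ∃ s : ℝ, 0 < s ∧ star v ⬝ᵥ v = s :=
    ⟨_, (Complex.pos_iff.mp hpos).1,
      Complex.eq_re_of_ofReal_le (r := 0) (by rw [Complex.ofReal_zero]; exact hpos.le)⟩
  refine ⟨μ, ((√s)⁻¹ : ℝ) • v, ?_, ?_⟩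
  · rw [mulVec_smul, ← mulVecLin_apply, Module.End.mem_eigenspace_iff.mp hv, smul_comm]
  · rw [star_smul, smul_dotProduct, dotProduct_smul, hs, star_trivial, smul_smul,
      Complex.real_smul, ← Complex.ofReal_mul, ← mul_inv, Real.mul_self_sqrt hs0.le,
      inv_mul_cancel₀ hs0.ne', Complex.ofReal_one]

section Commutation

variable {m R : Type*} [Fintype m] [DecidableEq m] [CommSemiring R] {A B : Matrix m m R} {ζ : R}

lemma mul_pow_eq_smul_pow_mul (h : A * B = ζ • (B * A)) (k : ℕ) :
    A * B ^ k = ζ ^ k • (B ^ k * A) := by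
  induction k with
  | zero => simp
  | succ k ih =>
    rw [pow_succ, ← Matrix.mul_assoc, ih, Matrix.smul_mul, Matrix.mul_assoc, h, Matrix.mul_smul,
      smul_smul, ← pow_succ, ← Matrix.mul_assoc]

lemma mulVec_pow_mulVec_eq_smul (h : A * B = ζ • (B * A)) {μ : R} {v : m → R}
    (hv : A *ᵥ v = μ • v) (k : ℕ) : A *ᵥ (B ^ k *ᵥ v) = (ζ ^ k * μ) • (B ^ k *ᵥ v) := by
  rw [mulVec_mulVec, mul_pow_eq_smul_pow_mul h, smul_mulVec, ← mulVec_mulVec, hv, mulVec_smul,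
    smul_smul]

end Commutation

section ClockShift

variable {R : Type*} [CommRing R] (n : ℕ)

def clock (ζ μ : R) : Matrix (Fin (n + 1)) (Fin (n + 1)) R :=
  diagonal fun k => ζ ^ (k : ℕ) * μ

/-- Sends the basis vector `e k` to `e (k + 1)` for `k < n`, and `e n` to `c • e 0`. -/
def shift (c : R) : Matrix (Fin (n + 1)) (Fin (n + 1)) R :=
  Equiv.Perm.permMatrix R (finRotate (n + 1))⁻¹ * diagonal (Function.update 1 (Fin.last n) c)

lemma shift_apply (c : R) (j k : Fin (n + 1)) :
    shift n c j k =
      if j = finRotate (n + 1) k then Function.update (1 : Fin (n + 1) → R) (Fin.last n) c k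
      else 0 := by
  rw [shift, mul_diagonal]
  simp only [PEquiv.toMatrix_apply, Equiv.toPEquiv_apply, Option.mem_some_iff,
    Equiv.Perm.inv_eq_iff_eq, ite_mul, one_mul, zero_mul]

lemma det_clock (ζ μ : R) :
    (clock n ζ μ).det = (∏ k : Fin (n + 1), ζ ^ (k : ℕ)) * μ ^ (n + 1) := by
  rw [clock, det_diagonal, Finset.prod_mul_distrib, Finset.prod_const, Finset.card_univ,
    Fintype.card_fin]

lemma det_shift (c : R) : (shift n c).det = (-1) ^ n * c := by
  rw [shift, det_mul, det_permutation, Equiv.Perm.sign_inv, sign_finRotate, det_diagonal,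
    Finset.prod_update_of_mem (Finset.mem_univ _)]
  simp

lemma det_shift_injective : Function.Injective fun c : R => (shift n c).det := fun c c' h => by
  simp only [det_shift] at h
  exact ((isUnit_neg_one (α := R)).pow n).mul_left_cancel h

end ClockShift

section NormalForm

variable {𝕜 : Type*} [RCLike 𝕜] {n : ℕ} {ζ μ : 𝕜} {A B : Matrix (Fin (n + 1)) (Fin (n + 1)) 𝕜}
  {v : Fin (n + 1) → 𝕜}

theorem exists_unitary_conjTranspose_mul_mul_eq_clock_shift (hζ : IsPrimitiveRoot ζ (n + 1))
    (hA : A ∈ unitaryGroup (Fin (n + 1)) 𝕜) (hB : B ∈ unitaryGroup (Fin (n + 1)) 𝕜)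
    (h : A * B = ζ • (B * A)) (hv : A *ᵥ v = μ • v) (hv1 : star v ⬝ᵥ v = 1) :
    ∃ P ∈ unitaryGroup (Fin (n + 1)) 𝕜,
      Pᴴ * A * P = clock n ζ μ ∧ Pᴴ * B * P = shift n (star v ⬝ᵥ B ^ (n + 1) *ᵥ v) := by
  have hμ : μ ≠ 0 := ne_zero_of_mulVec_eq_smul hA hv (by rintro rfl; simp at hv1)
  have hnorm (i : ℕ) : star (B ^ i *ᵥ v) ⬝ᵥ B ^ i *ᵥ v = 1 := by
    rw [star_mulVec_dotProduct_mulVec (pow_mem hB i), hv1]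
  have horth {i j : ℕ} (hij : ζ ^ i ≠ ζ ^ j) : star (B ^ i *ᵥ v) ⬝ᵥ B ^ j *ᵥ v = 0 :=
    star_dotProduct_eq_zero_of_eigenvalue_ne hA (mulVec_pow_mulVec_eq_smul h hv i)
      (mulVec_pow_mulVec_eq_smul h hv j) (mt (mul_right_cancel₀ hμ) hij)
  have hpow_ne {j k : Fin (n + 1)} (hjk : j ≠ k) : ζ ^ (j : ℕ) ≠ ζ ^ (k : ℕ) :=
    fun h' => hjk (Fin.ext (hζ.pow_inj j.isLt k.isLt h'))
  have hgram (j k : Fin (n + 1)) :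
      star (B ^ (j : ℕ) *ᵥ v) ⬝ᵥ B ^ (k : ℕ) *ᵥ v = (1 : Matrix (Fin (n + 1)) _ 𝕜) j k := by
    rcases eq_or_ne j k with rfl | hjk
    · rw [hnorm, one_apply_eq]
    · rw [horth (hpow_ne hjk), one_apply_ne hjk]
  set P : Matrix (Fin (n + 1)) (Fin (n + 1)) 𝕜 := (of fun k : Fin (n + 1) => B ^ (k : ℕ) *ᵥ v)ᵀ
  have hP (M : Matrix (Fin (n + 1)) (Fin (n + 1)) 𝕜) (j k : Fin (n + 1)) :
      (Pᴴ * M * P) j k = star (B ^ (j : ℕ) *ᵥ v) ⬝ᵥ M *ᵥ B ^ (k : ℕ) *ᵥ v :=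
    mul_mul_apply _ _ _ _ _
  refine ⟨P, mem_unitaryGroup_iff'.mpr ?_, ?_, ?_⟩
  · ext j k
    rw [star_eq_conjTranspose, ← Matrix.mul_one Pᴴ, hP, one_mulVec, hgram]
  · ext j k
    rw [hP, mulVec_pow_mulVec_eq_smul h hv, dotProduct_smul, hgram, clock, diagonal_apply,
      one_apply, smul_eq_mul]
    split_ifs with hjk
    · rw [hjk, mul_one]
    · rw [mul_zero]
  · ext j k
    rw [hP, mulVec_mulVec, ← pow_succ', shift_apply]
    split_ifs with hjk
    · rcases eq_or_ne k (Fin.last n) with rfl | hk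
      · rw [hjk, finRotate_last, Fin.val_zero, Fin.val_last, pow_zero, one_mulVec,
          Function.update_self]
      · rw [hjk, coe_finRotate_of_ne_last hk, hnorm, Function.update_of_ne hk, Pi.one_apply]
    · refine horth fun h' => hpow_ne hjk ?_
      rw [h', ← pow_val_finRotate hζ.pow_eq_one]

lemma det_eq_prod_mul_pow (hζ : IsPrimitiveRoot ζ (n + 1))
    (hA : A ∈ unitaryGroup (Fin (n + 1)) 𝕜) (hB : B ∈ unitaryGroup (Fin (n + 1)) 𝕜)
    (h : A * B = ζ • (B * A)) (hv : A *ᵥ v = μ • v) (hv1 : star v ⬝ᵥ v = 1) :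
    A.det = (∏ k : Fin (n + 1), ζ ^ (k : ℕ)) * μ ^ (n + 1) := by
  obtain ⟨P, hP, hPA, -⟩ :=
    exists_unitary_conjTranspose_mul_mul_eq_clock_shift hζ hA hB h hv hv1
  rw [← det_clock, ← hPA, det_conjTranspose_mul_mul hP]

end NormalForm

end WeylPair

open WeylPair

/-- Let `ζ` be a primitive `r`-th root of unity.  Two pairs of
unitary matrices `(A, B)` and `(A', B')` with `A·B = ζ·(B·A)`, `A'·B' = ζ·(B'·A')`,
`det A = det A'` and `det B = det B'` are simultaneously unitarily conjugate. -/
theorem stmt_6 (r : ℕ) (hr : 1 ≤ r) (ζ : ℂ) (hζr : ζ ^ r = 1)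
    (hζprim : ∀ k : ℕ, 1 ≤ k → k < r → ζ ^ k ≠ 1)
    (A B A' B' : Matrix (Fin r) (Fin r) ℂ)
    (hA : A * Aᴴ = 1) (hB : B * Bᴴ = 1) (hA' : A' * A'ᴴ = 1) (hB' : B' * B'ᴴ = 1)
    (h1 : A * B = ζ • (B * A)) (h2 : A' * B' = ζ • (B' * A'))
    (hdetA : A.det = A'.det) (hdetB : B.det = B'.det) :
    ∃ U : Matrix (Fin r) (Fin r) ℂ, U * Uᴴ = 1 ∧ A' = U * A * U⁻¹ ∧ B' = U * B * U⁻¹ := by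
  obtain ⟨n, rfl⟩ : ∃ n, r = n + 1 := ⟨r - 1, by omega⟩
  have hζ : IsPrimitiveRoot ζ (n + 1) := .mk_of_lt ζ n.succ_pos hζr hζprim
  rw [← star_eq_conjTranspose, ← mem_unitaryGroup_iff] at hA hB hA' hB'
  obtain ⟨μ, v, hv, hv1⟩ := exists_eigenvector_star_dotProduct_self_eq_one A
  obtain ⟨μ', v', hv', hv'1⟩ := exists_eigenvector_star_dotProduct_self_eq_one A'
  have hprod : ∏ k : Fin (n + 1), ζ ^ (k : ℕ) ≠ 0 :=
    Finset.prod_ne_zero_iff.mpr fun k _ => pow_ne_zero _ (hζ.ne_zero n.succ_ne_zero)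
  have hpow : μ ^ (n + 1) = μ' ^ (n + 1) := by
    refine mul_left_cancel₀ hprod ?_
    rw [← det_eq_prod_mul_pow hζ hA hB h1 hv hv1, hdetA,
      det_eq_prod_mul_pow hζ hA' hB' h2 hv' hv'1]
  obtain ⟨i, hi⟩ := hζ.exists_pow_mul_eq_of_pow_eq_pow
    (ne_zero_of_mulVec_eq_smul hA' hv' (by rintro rfl; simp at hv'1)) hpow
  have hw : A' *ᵥ (B' ^ i *ᵥ v') = μ • (B' ^ i *ᵥ v') := hi ▸ mulVec_pow_mulVec_eq_smul h2 hv' i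
  have hw1 : star (B' ^ i *ᵥ v') ⬝ᵥ B' ^ i *ᵥ v' = 1 := by
    rw [star_mulVec_dotProduct_mulVec (pow_mem hB' i), hv'1]
  obtain ⟨P, hP, hPA, hPB⟩ :=
    exists_unitary_conjTranspose_mul_mul_eq_clock_shift hζ hA hB h1 hv hv1
  obtain ⟨Q, hQ, hQA, hQB⟩ :=
    exists_unitary_conjTranspose_mul_mul_eq_clock_shift hζ hA' hB' h2 hw hw1
  rw [← det_conjTranspose_mul_mul hP B, ← det_conjTranspose_mul_mul hQ B', hPB, hQB] at hdetB
  rw [det_shift_injective n hdetB] at hPB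
  exact ⟨Q * Pᴴ, mem_unitaryGroup_iff.mp (mul_mem hQ (Unitary.star_mem hP)),
    eq_mul_mul_inv_of_conjTranspose_mul_mul_eq hP hQ (hPA.trans hQA.symm),
    eq_mul_mul_inv_of_conjTranspose_mul_mul_eq hP hQ (hPB.trans hQB.symm)⟩
end

section
/- Let f : ℂ × ℂ × ℂ → ℂ be an entire function (complex differentiable at every point of ℂ³). Define F : ℂ⁴ → ℂ by F(p, q, r, s) = ∮_{|z|=1} f(z, p·z + q, r·z + s) dz, the contour integral over the unit circle centered at 0. Then F satisfies the ultrahyperbolic equation ∂²F/∂p∂s = ∂²F/∂q∂r; that is, for all (p, q, r, s) ∈ ℂ⁴, the complex derivative in p of the function p′ ↦ (derivative in s of s′ ↦ F(p′, q, r, s′)) equals the complex derivative in q of the function q′ ↦ (derivative in r of r′ ↦ F(p, q′, r′, s)). -/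
/-!
Differentiating under the contour integral, `∂ₛ` and `∂_q` act on `f (z, p z + q, r z + s)` as
`∂₃ f` and `∂₂ f`, while `∂_r` and `∂_p` bring an extra factor `z`. Hence both `∂_p ∂ₛ F` and
`∂_q ∂_r F` equal `∮ z • ∂₂ ∂₃ f (z, p z + q, r z + s)`; no symmetry of mixed partials is needed.

Since `f` is only assumed complex differentiable, the regularity used to differentiate under the
integral (joint continuity of `∂₃ f` and `∂₂ ∂₃ f`, holomorphy of `∂₃ f` in the second variable)
comes from the one-variable Cauchy formula for the derivative, with the other variables as
parameters.
-/

open MeasureTheory Metric Complex Function Real Set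

section ParametricCircleIntegral

variable {E : Type*} [NormedAddCommGroup E] [NormedSpace ℂ E]

theorem continuous_circleIntegral {X : Type*} [TopologicalSpace X] {g : X → ℂ → E}
    {c : X → ℂ} {R : ℝ}
    (hg : Continuous fun p : X × ℝ => g p.1 (circleMap (c p.1) R p.2)) :
    Continuous fun x => ∮ z in C(c x, R), g x z := by
  simp only [circleIntegral, deriv_circleMap]
  exact intervalIntegral.continuous_parametric_intervalIntegral_of_continuous'
    ((by fun_prop : Continuous fun p : X × ℝ => circleMap 0 R p.2 * I).smul hg) _ _

theorem hasDerivAt_circleIntegral {g g' : ℂ → ℂ → E} {c : ℂ} {R : ℝ}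
    (hg : Continuous fun p : ℂ × ℝ => g p.1 (circleMap c R p.2))
    (hg' : Continuous fun p : ℂ × ℝ => g' p.1 (circleMap c R p.2))
    (hd : ∀ t z, HasDerivAt (g · z) (g' t z) t) (t₀ : ℂ) :
    HasDerivAt (fun t => ∮ z in C(c, R), g t z) (∮ z in C(c, R), g' t₀ z) t₀ := by
  obtain ⟨C, hC⟩ := ((isCompact_closedBall t₀ 1).prod (isCompact_uIcc (a := 0) (b := 2 * π))
    ).exists_bound_of_continuousOn hg'.continuousOn
  have hcirc : Continuous fun p : ℂ × ℝ => deriv (circleMap c R) p.2 := by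
    simp only [deriv_circleMap]
    fun_prop
  refine (intervalIntegral.hasDerivAt_integral_of_dominated_loc_of_deriv_le
    (F := fun t θ => deriv (circleMap c R) θ • g t (circleMap c R θ))
    (F' := fun t θ => deriv (circleMap c R) θ • g' t (circleMap c R θ))
    (μ := volume) (bound := fun _ => |R| * C) (ball_mem_nhds t₀ one_pos) ?_ ?_ ?_ ?_
    intervalIntegrable_const ?_).2
  · exact .of_forall fun t => ((hcirc.smul hg).comp (.prodMk_right t)).aestronglyMeasurable
  · exact ((hcirc.smul hg).comp (.prodMk_right t₀)).intervalIntegrable _ _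
  · exact ((hcirc.smul hg').comp (.prodMk_right t₀)).aestronglyMeasurable
  · refine .of_forall fun θ hθ t ht => ?_
    rw [norm_smul, deriv_circleMap, norm_mul, norm_circleMap_zero, norm_I, mul_one]
    exact mul_le_mul_of_nonneg_left
      (hC (t, θ) ⟨ball_subset_closedBall ht, Ioc_subset_Icc_self hθ⟩) (abs_nonneg R)
  · exact .of_forall fun θ _ t _ => (hd t _).const_smul _

variable [CompleteSpace E]

theorem deriv_eq_circleIntegral {k : ℂ → E} (hk : Differentiable ℂ k) (z : ℂ) :
    deriv k z = (2 * π * I : ℂ)⁻¹ • ∮ w in C(z, 1), ((w - z) ^ 2)⁻¹ • k w :=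
  (two_pi_I_inv_smul_circleIntegral_sub_sq_inv_smul_of_differentiable isOpen_univ
    (subset_univ _) hk.differentiableOn (mem_ball_self one_pos)).symm

theorem continuous_inv_sq_circleMap :
    Continuous fun θ : ℝ => ((circleMap 0 1 θ) ^ 2)⁻¹ :=
  (by fun_prop : Continuous fun θ => circleMap 0 1 θ ^ 2).inv₀
    fun _ => pow_ne_zero 2 (circleMap_ne_center one_ne_zero)

theorem continuous_deriv_of_continuous_uncurry {X : Type*} [TopologicalSpace X]
    {h : X → ℂ → E} (hh : Continuous (uncurry h)) (hd : ∀ x, Differentiable ℂ (h x)) :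
    Continuous fun p : X × ℂ => deriv (h p.1) p.2 := by
  simp only [fun p : X × ℂ => deriv_eq_circleIntegral (hd p.1) p.2]
  refine continuous_const.smul (continuous_circleIntegral (c := Prod.snd) ?_)
  simp only [circleMap_sub_center]
  exact (continuous_inv_sq_circleMap.comp continuous_snd).smul
    (hh.comp (f := fun p : (X × ℂ) × ℝ => (p.1.1, circleMap p.1.2 1 p.2))
      (by unfold circleMap; fun_prop))

theorem differentiable_deriv_of_separately_differentiable {h : ℂ → ℂ → E}
    (hh : Continuous (uncurry h)) (hd₁ : ∀ z, Differentiable ℂ (h · z))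
    (hd₂ : ∀ t, Differentiable ℂ (h t)) (z : ℂ) :
    Differentiable ℂ fun t => deriv (h t) z := by
  have hderiv : Continuous fun p : ℂ × ℂ => deriv (h · p.1) p.2 :=
    continuous_deriv_of_continuous_uncurry (h := fun w t => h t w) (hh.comp continuous_swap) hd₁
  intro t₀
  simp only [fun t => deriv_eq_circleIntegral (hd₂ t) z]
  refine ((hasDerivAt_circleIntegral (g' := fun t w => ((w - z) ^ 2)⁻¹ • deriv (h · w) t)
    ?_ ?_ (fun t w => ?_) t₀).const_smul _).differentiableAt
  · simp only [circleMap_sub_center]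
    exact (continuous_inv_sq_circleMap.comp continuous_snd).smul
      (hh.comp (f := fun p : ℂ × ℝ => (p.1, circleMap z 1 p.2)) (by fun_prop))
  · simp only [circleMap_sub_center]
    exact (continuous_inv_sq_circleMap.comp continuous_snd).smul
      (hderiv.comp (f := fun p : ℂ × ℝ => (circleMap z 1 p.2, p.1)) (by fun_prop))
  · exact (hd₁ w t).hasDerivAt.const_smul _

end ParametricCircleIntegral

noncomputable section PenroseTransform

variable {E : Type*} [NormedAddCommGroup E] [NormedSpace ℂ E]

def partialSnd (φ : ℂ × ℂ × ℂ → E) (x : ℂ × ℂ × ℂ) : E :=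
  deriv (fun b => φ (x.1, b, x.2.2)) x.2.1

def partialThd (φ : ℂ × ℂ × ℂ → E) (x : ℂ × ℂ × ℂ) : E :=
  deriv (fun c => φ (x.1, x.2.1, c)) x.2.2

def penroseTransform (φ : ℂ × ℂ × ℂ → E) (p q r s : ℂ) : E :=
  ∮ z in C(0, 1), φ (z, p * z + q, r * z + s)

variable {f : ℂ × ℂ × ℂ → E}

theorem hasDerivAt_partialThd (hf : Differentiable ℂ f) (a b c : ℂ) :
    HasDerivAt (fun c => f (a, b, c)) (partialThd f (a, b, c)) c :=
  (hf.comp (by fun_prop) c).hasDerivAt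

variable [CompleteSpace E]

theorem continuous_partialThd (hf : Differentiable ℂ f) : Continuous (partialThd f) := by
  have H := continuous_deriv_of_continuous_uncurry (h := fun (x : ℂ × ℂ) c => f (x.1, x.2, c))
    (hf.continuous.comp (by fun_prop)) (fun _ => hf.comp (by fun_prop))
  exact H.comp (f := fun x : ℂ × ℂ × ℂ => ((x.1, x.2.1), x.2.2)) (by fun_prop)

theorem hasDerivAt_partialSnd_partialThd (hf : Differentiable ℂ f) (a b c : ℂ) :
    HasDerivAt (fun b => partialThd f (a, b, c)) (partialSnd (partialThd f) (a, b, c)) b :=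
  (differentiable_deriv_of_separately_differentiable (h := fun b c => f (a, b, c))
    (hf.continuous.comp (by fun_prop)) (fun _ => hf.comp (by fun_prop))
    (fun _ => hf.comp (by fun_prop)) c b).hasDerivAt

theorem continuous_partialSnd_partialThd (hf : Differentiable ℂ f) :
    Continuous (partialSnd (partialThd f)) := by
  have H := continuous_deriv_of_continuous_uncurry
    (h := fun (x : ℂ × ℂ) b => partialThd f (x.1, b, x.2))
    ((continuous_partialThd hf).comp (by fun_prop))
    (fun x b => (hasDerivAt_partialSnd_partialThd hf x.1 b x.2).differentiableAt)
  exact H.comp (f := fun x : ℂ × ℂ × ℂ => ((x.1, x.2.2), x.2.1)) (by fun_prop)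

theorem deriv_deriv_penroseTransform_ps (hf : Differentiable ℂ f) (p q r s : ℂ) :
    deriv (fun p' => deriv (fun s' => penroseTransform f p' q r s') s) p =
      ∮ z in C(0, 1), z • partialSnd (partialThd f) (z, p * z + q, r * z + s) := by
  have hf₀ := hf.continuous
  have hf₃ := continuous_partialThd hf
  have hf₂₃ := continuous_partialSnd_partialThd hf
  have inner : ∀ p', HasDerivAt (fun s' => penroseTransform f p' q r s')
      (∮ z in C(0, 1), partialThd f (z, p' * z + q, r * z + s)) s := fun p' =>
    hasDerivAt_circleIntegral (g := fun t z => f (z, p' * z + q, r * z + t))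
      (g' := fun t z => partialThd f (z, p' * z + q, r * z + t)) (by fun_prop) (by fun_prop)
      (fun t z => (hasDerivAt_partialThd hf _ _ _).comp_const_add _ _) s
  have outer : HasDerivAt (fun p' => ∮ z in C(0, 1), partialThd f (z, p' * z + q, r * z + s))
      (∮ z in C(0, 1), z • partialSnd (partialThd f) (z, p * z + q, r * z + s)) p :=
    hasDerivAt_circleIntegral (g := fun t z => partialThd f (z, t * z + q, r * z + s))
      (g' := fun t z => z • partialSnd (partialThd f) (z, t * z + q, r * z + s))
      (by fun_prop) (by fun_prop)
      (fun t z => (hasDerivAt_partialSnd_partialThd hf _ _ _).scomp t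
        ((hasDerivAt_mul_const z).add_const q)) p
  simp only [fun p' => (inner p').deriv]
  exact outer.deriv

theorem deriv_deriv_penroseTransform_qr (hf : Differentiable ℂ f) (p q r s : ℂ) :
    deriv (fun q' => deriv (fun r' => penroseTransform f p q' r' s) r) q =
      ∮ z in C(0, 1), z • partialSnd (partialThd f) (z, p * z + q, r * z + s) := by
  have hf₀ := hf.continuous
  have hf₃ := continuous_partialThd hf
  have hf₂₃ := continuous_partialSnd_partialThd hf
  have inner : ∀ q', HasDerivAt (fun r' => penroseTransform f p q' r' s)
      (∮ z in C(0, 1), z • partialThd f (z, p * z + q', r * z + s)) r := fun q' =>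
    hasDerivAt_circleIntegral (g := fun t z => f (z, p * z + q', t * z + s))
      (g' := fun t z => z • partialThd f (z, p * z + q', t * z + s)) (by fun_prop) (by fun_prop)
      (fun t z => (hasDerivAt_partialThd hf _ _ _).scomp t ((hasDerivAt_mul_const z).add_const s))
      r
  have outer : HasDerivAt
      (fun q' => ∮ z in C(0, 1), z • partialThd f (z, p * z + q', r * z + s))
      (∮ z in C(0, 1), z • partialSnd (partialThd f) (z, p * z + q, r * z + s)) q :=
    hasDerivAt_circleIntegral (g := fun t z => z • partialThd f (z, p * z + t, r * z + s))
      (g' := fun t z => z • partialSnd (partialThd f) (z, p * z + t, r * z + s))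
      (by fun_prop) (by fun_prop)
      (fun t z => ((hasDerivAt_partialSnd_partialThd hf _ _ _).comp_const_add _ _).const_smul z) q
  simp only [fun q' => (inner q').deriv]
  exact outer.deriv

end PenroseTransform

/-- Let `f : ℂ × ℂ × ℂ → ℂ` be entire and define
`F (p, q, r, s) = ∮_{|z|=1} f (z, p·z + q, r·z + s) dz`.  Then `F` satisfies the
ultrahyperbolic equation `∂²F/∂p∂s = ∂²F/∂q∂r`. -/
theorem stmt_7 (f : ℂ × ℂ × ℂ → ℂ) (hf : Differentiable ℂ f)
    (F : ℂ → ℂ → ℂ → ℂ → ℂ)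
    (hF : ∀ p q r s : ℂ, F p q r s = ∮ z in C(0, 1), f (z, p * z + q, r * z + s))
    (p q r s : ℂ) :
    deriv (fun p' => deriv (fun s' => F p' q r s') s) p =
      deriv (fun q' => deriv (fun r' => F p q' r' s) r) q := by
  obtain rfl : F = penroseTransform f := by ext; exact hF ..
  rw [deriv_deriv_penroseTransform_ps hf, deriv_deriv_penroseTransform_qr hf]
end

section
/- Let f : ℂ × ℂ × ℂ → ℂ be an entire function (complex differentiable at every point of ℂ³). Define u : ℝ⁴ → ℂ by u(x₁, x₂, x₃, x₄) = ∮_{|z|=1} f(z, (x₁ + i x₂)·z + (x₃ + i x₄), (−x₃ + i x₄)·z + (x₁ − i x₂)) dz, the contour integral over the unit circle centered at 0. Then u is harmonic on ℝ⁴: for every point of ℝ⁴, the sum over j = 1,…,4 of the second partial derivatives ∂²u/∂x_j² vanishes. -/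
/-!
An entire function of several complex variables is smooth: by Cauchy's formula on the complex
line through `x` in direction `v`, `fderiv f x v` is a circle average of `f`, and differentiating
under that average shows that it is again entire. So both real derivatives of `u` can be taken
under the contour integral, and the second `x_j`-derivative of the integrand is
`D²f (P z) (v_j z) (v_j z)`, where `P z = (z, p z + q, r z + s)` and `v_j z = ∂P z / ∂x_j`.
Since the substitution turns `ps - qr` into the Euclidean form, `∑ⱼ v_j z ⊗ v_j z = 0`, so the four
integrands cancel pointwise.
-/

open Complex Metric Set Function
open scoped ContDiff

section ParametricIntegral

variable {E : Type*} [NormedAddCommGroup E] [NormedSpace ℝ E]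

theorem hasFDerivAt_intervalIntegral_of_continuous {𝕜 H : Type*} [RCLike 𝕜] [NormedSpace 𝕜 E]
    [NormedAddCommGroup H] [NormedSpace 𝕜 H] [ProperSpace H]
    {F : H → ℝ → E} {F' : H → ℝ → H →L[𝕜] E}
    (hF : Continuous (uncurry F)) (hF' : Continuous (uncurry F'))
    (hFF' : ∀ x t, HasFDerivAt (F · t) (F' x t) x) (a b : ℝ) (x₀ : H) :
    HasFDerivAt (fun x => ∫ t in a..b, F x t) (∫ t in a..b, F' x₀ t) x₀ := by
  obtain ⟨C, hC⟩ := ((isCompact_closedBall x₀ 1).prod isCompact_uIcc).exists_bound_of_continuousOn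
    hF'.continuousOn
  refine intervalIntegral.hasFDerivAt_integral_of_dominated_of_fderiv_le (bound := fun _ => C)
    (ball_mem_nhds x₀ one_pos) (.of_forall fun x => ?_) ?_ ?_ ?_ intervalIntegrable_const
    (.of_forall fun t _ x _ => hFF' x t)
  · exact (hF.comp (Continuous.prodMk_right x)).aestronglyMeasurable
  · exact (hF.comp (Continuous.prodMk_right x₀)).intervalIntegrable a b
  · exact (hF'.comp (Continuous.prodMk_right x₀)).aestronglyMeasurable
  · exact .of_forall fun t ht x hx =>
      hC (x, t) ⟨ball_subset_closedBall hx, uIoc_subset_uIcc ht⟩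

theorem DifferentiableAt.hasDerivAt_uncurry_left {G : ℝ → ℝ → E} {t θ : ℝ}
    (hG : DifferentiableAt ℝ (uncurry G) (t, θ)) :
    HasDerivAt (G · θ) (fderiv ℝ (uncurry G) (t, θ) (1, 0)) t :=
  hG.hasFDerivAt.comp_hasDerivAt (l := uncurry G) t
    ((hasDerivAt_id' t).prodMk (hasDerivAt_const t θ))

theorem ContDiff.uncurry_deriv {G : ℝ → ℝ → E} {n : WithTop ℕ∞}
    (hG : ContDiff ℝ (n + 1) (uncurry G)) :
    ContDiff ℝ n (uncurry fun t θ => deriv (G · θ) t) := by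
  have hd : (uncurry fun t θ => deriv (G · θ) t) = fun p => fderiv ℝ (uncurry G) p (1, 0) :=
    funext fun p => (hG.differentiable (by simp) p).hasDerivAt_uncurry_left.deriv
  rw [hd]
  exact (hG.fderiv_right le_rfl).clm_apply contDiff_const

theorem hasDerivAt_intervalIntegral_of_contDiff {G : ℝ → ℝ → E}
    (hG : ContDiff ℝ 1 (uncurry G)) (a b t₀ : ℝ) :
    HasDerivAt (fun t => ∫ θ in a..b, G t θ) (∫ θ in a..b, deriv (G · θ) t₀) t₀ := by
  have hG' : Continuous (uncurry fun t θ => deriv (G · θ) t) :=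
    (ContDiff.uncurry_deriv (n := 0) hG).continuous
  have hspan := ContinuousLinearMap.toSpanSingletonCLE (𝕜 := ℝ) (E := E) |>.continuous
  have key := hasFDerivAt_intervalIntegral_of_continuous (𝕜 := ℝ) hG.continuous
    (F' := fun t θ => .toSpanSingleton ℝ (deriv (G · θ) t)) (hspan.comp hG')
    (fun t θ => (hG.differentiable one_ne_zero (t, θ)).hasDerivAt_uncurry_left.differentiableAt
      |>.hasDerivAt.hasFDerivAt) a b t₀
  have hint : IntervalIntegrable (fun θ => ContinuousLinearMap.toSpanSingleton ℝ
      (deriv (G · θ) t₀)) MeasureTheory.volume a b :=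
    (hspan.comp (hG'.comp (Continuous.prodMk_right t₀))).intervalIntegrable a b
  simpa [ContinuousLinearMap.intervalIntegral_apply hint] using key.hasDerivAt

theorem deriv_deriv_intervalIntegral_of_contDiff {G : ℝ → ℝ → E}
    (hG : ContDiff ℝ 2 (uncurry G)) (a b t₀ : ℝ) :
    deriv (fun t => deriv (fun s => ∫ θ in a..b, G s θ) t) t₀ =
      ∫ θ in a..b, deriv (fun t => deriv (G · θ) t) t₀ := by
  have hfirst : (deriv fun s => ∫ θ in a..b, G s θ) = fun t => ∫ θ in a..b, deriv (G · θ) t :=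
    funext fun t => (hasDerivAt_intervalIntegral_of_contDiff (hG.of_le one_le_two) a b t).deriv
  rw [hfirst]
  exact (hasDerivAt_intervalIntegral_of_contDiff (ContDiff.uncurry_deriv (n := 1) hG) a b t₀).deriv

end ParametricIntegral

section SeveralComplexVariables

variable {E F : Type*} [NormedAddCommGroup E] [NormedSpace ℂ E]
  [NormedAddCommGroup F] [NormedSpace ℂ F] {Φ : E → F}

theorem Continuous.uncurry_circleMap_inv_smul_comp {g : E → F} (hg : Continuous g) (v : E) :
    Continuous (uncurry fun x θ => (circleMap 0 1 θ)⁻¹ • g (x + circleMap 0 1 θ • v)) := by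
  fun_prop (disch := exact fun _ => circleMap_ne_center one_ne_zero)

variable [CompleteSpace F]

-- Cauchy's formula for the derivative at `0` of the entire function `τ ↦ Φ (x + τ • v)`.
theorem Differentiable.fderiv_apply_eq_circleAverage (hΦ : Differentiable ℂ Φ) (x v : E) :
    fderiv ℂ Φ x v = Real.circleAverage (fun z : ℂ => z⁻¹ • Φ (x + z • v)) 0 1 := by
  have hline : Differentiable ℂ fun τ : ℂ => Φ (x + τ • v) := by fun_prop
  have hderiv : _root_.deriv (fun τ : ℂ => Φ (x + τ • v)) 0 = fderiv ℂ Φ x v := by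
    have h := (hΦ (x + (0 : ℂ) • v)).hasFDerivAt.comp_hasDerivAt (0 : ℂ)
      (((hasDerivAt_id' (0 : ℂ)).smul_const v).const_add x)
    simp only [zero_smul, add_zero, one_smul] at h
    exact h.deriv
  have hcauchy := hline.differentiableOn.deriv_eq_smul_circleIntegral (c := 0) one_pos
  have hint : (fun z : ℂ => (z - 0)⁻¹ • z⁻¹ • Φ (x + z • v)) =
      fun z => (1 / (z - 0) ^ 2) • Φ (x + z • v) := by
    funext z
    rw [smul_smul, sub_zero, one_div, pow_two, mul_inv]
  rw [Real.circleAverage_eq_circleIntegral one_ne_zero, ← hderiv, hint, hcauchy, smul_smul,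
    inv_mul_cancel₀ (by simp [Real.pi_ne_zero]), one_smul]

variable [FiniteDimensional ℂ E]

theorem Differentiable.continuous_fderiv_of_finiteDimensional (hΦ : Differentiable ℂ Φ) :
    Continuous (fderiv ℂ Φ) := by
  refine continuous_clm_apply.2 fun v => ?_
  simp_rw [hΦ.fderiv_apply_eq_circleAverage, Real.circleAverage_def]
  exact (intervalIntegral.continuous_parametric_intervalIntegral_of_continuous'
    (hΦ.continuous.uncurry_circleMap_inv_smul_comp v) _ _).const_smul _

theorem Differentiable.differentiable_fderiv_apply (hΦ : Differentiable ℂ Φ) (v : E) :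
    Differentiable ℂ fun x => fderiv ℂ Φ x v := by
  simp_rw [hΦ.fderiv_apply_eq_circleAverage, Real.circleAverage_def]
  refine fun x₀ => (hasFDerivAt_intervalIntegral_of_continuous (𝕜 := ℂ)
    (F' := fun x θ => (circleMap 0 1 θ)⁻¹ • fderiv ℂ Φ (x + circleMap 0 1 θ • v))
    (hΦ.continuous.uncurry_circleMap_inv_smul_comp v)
    (hΦ.continuous_fderiv_of_finiteDimensional.uncurry_circleMap_inv_smul_comp v)
    (fun x θ => ?_) _ _ x₀).differentiableAt.const_smul _
  exact ((hΦ _).hasFDerivAt.comp x ((hasFDerivAt_id x).add_const _)).const_smul _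

theorem Differentiable.contDiff_of_finiteDimensional (hΦ : Differentiable ℂ Φ) :
    ContDiff ℂ ∞ Φ := by
  suffices ∀ n : ℕ, ∀ Φ : E → F, Differentiable ℂ Φ → ContDiff ℂ n Φ from
    contDiff_infty.2 fun n => this n Φ hΦ
  intro n
  induction n with
  | zero => exact fun Φ hΦ => contDiff_zero.2 hΦ.continuous
  | succ n ih =>
    exact fun Φ hΦ => contDiff_succ_iff_fderiv_apply.2
      ⟨hΦ, by simp, fun v => ih _ (hΦ.differentiable_fderiv_apply v)⟩

end SeveralComplexVariables

section LineDerivatives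

variable {E F : Type*} [NormedAddCommGroup E] [NormedSpace ℂ E]
  [NormedAddCommGroup F] [NormedSpace ℂ F] {Φ : E → F}

theorem ContDiff.deriv_deriv_smul_comp_add_ofReal_smul (hΦ : ContDiff ℂ 2 Φ) (k : ℂ) (w v : E)
    (t₀ : ℝ) :
    deriv (fun t => deriv (fun s : ℝ => k • Φ (w + (s : ℂ) • v)) t) t₀ =
      k • fderiv ℂ (fderiv ℂ Φ) (w + (t₀ : ℂ) • v) v v := by
  have hline (t : ℝ) : HasDerivAt (fun s : ℝ => w + (s : ℂ) • v) v t := by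
    simpa using ((hasDerivAt_id' t).ofReal_comp.smul_const v).const_add w
  have hfirst : (deriv fun s : ℝ => k • Φ (w + (s : ℂ) • v)) =
      fun t : ℝ => k • fderiv ℂ Φ (w + (t : ℂ) • v) v :=
    funext fun t => ((((hΦ.differentiable two_ne_zero _).hasFDerivAt.restrictScalars ℝ)
      |>.comp_hasDerivAt t (hline t)).const_smul k).deriv
  have hΦ' : Differentiable ℂ (fderiv ℂ Φ) :=
    (hΦ.fderiv_right (m := 1) le_rfl).differentiable one_ne_zero
  have hsecond := ((hΦ' _).hasFDerivAt.restrictScalars ℝ).comp_hasDerivAt t₀ (hline t₀)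
  rw [hfirst]
  exact ((((ContinuousLinearMap.apply ℂ F v).restrictScalars ℝ).hasFDerivAt.comp_hasDerivAt t₀
    hsecond).const_smul k).deriv

theorem ContDiff.deriv_deriv_circleIntegral_comp_add_ofReal_smul (hΦ : ContDiff ℂ 2 Φ)
    {w v : ℂ → E} (hw : ContDiff ℝ 2 w) (hv : ContDiff ℝ 2 v) (c : ℂ) (R t₀ : ℝ) :
    deriv (fun t => deriv (fun s : ℝ => ∮ z in C(c, R), Φ (w z + (s : ℂ) • v z)) t) t₀ =
      ∮ z in C(c, R), fderiv ℂ (fderiv ℂ Φ) (w z + (t₀ : ℂ) • v z) (v z) (v z) := by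
  simp only [circleIntegral]
  rw [deriv_deriv_intervalIntegral_of_contDiff]
  · simp only [hΦ.deriv_deriv_smul_comp_add_ofReal_smul]
  · have hz : ContDiff ℝ 2 fun p : ℝ × ℝ => circleMap c R p.2 :=
      (contDiff_circleMap c R).comp contDiff_snd
    simp only [deriv_circleMap]
    exact (((contDiff_circleMap 0 R).comp contDiff_snd).mul contDiff_const).smul
      ((hΦ.restrict_scalars ℝ).comp ((hw.comp hz).add
        ((ofRealCLM.contDiff.comp contDiff_fst).smul (hv.comp hz))))

end LineDerivatives

section NullDirections

variable {M N : Type*}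

/- The four vectors are the `x_j`-derivatives of `(p z + q, r z + s)` in the basis `a, b`;
`∑ⱼ ∂ⱼ ⊗ ∂ⱼ` is the form dual to `ps - qr`, which `(p, q, r, s) ↦ (p z + q, r z + s)` kills. -/
theorem LinearMap.sum_apply_bateman_directions_eq_zero [AddCommGroup M] [Module ℂ M]
    [AddCommGroup N] [Module ℂ N] (B : M →ₗ[ℂ] M →ₗ[ℂ] N) (a b : M) (z : ℂ) :
    B (z • a + b) (z • a + b) + B (I • (z • a - b)) (I • (z • a - b)) +
      B (a - z • b) (a - z • b) + B (I • (a + z • b)) (I • (a + z • b)) = 0 := by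
  simp only [map_add, map_sub, map_smul, LinearMap.add_apply, LinearMap.sub_apply,
    LinearMap.smul_apply]
  linear_combination (norm := module) I_sq • ((z ^ 2 + 1) • (B a a + B b b))

theorem circleIntegral_sum_bateman_directions_eq_zero [NormedAddCommGroup M] [NormedSpace ℂ M]
    [NormedAddCommGroup N] [NormedSpace ℂ N] {B : ℂ → M →L[ℂ] M →L[ℂ] N} (hB : Continuous B)
    (a b : M) :
    (∮ z in C(0, 1), B z (z • a + b) (z • a + b)) +
      (∮ z in C(0, 1), B z (I • (z • a - b)) (I • (z • a - b))) +
      (∮ z in C(0, 1), B z (a - z • b) (a - z • b)) +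
      (∮ z in C(0, 1), B z (I • (a + z • b)) (I • (a + z • b))) = 0 := by
  have hint {g : ℂ → N} (hg : Continuous g) : CircleIntegrable g 0 1 :=
    hg.continuousOn.circleIntegrable zero_le_one
  rw [← circleIntegral.integral_add (hint (by fun_prop)) (hint (by fun_prop)),
    ← circleIntegral.integral_add (hint (by fun_prop)) (hint (by fun_prop)),
    ← circleIntegral.integral_add (hint (by fun_prop)) (hint (by fun_prop))]
  have hnull (z : ℂ) := (B z).toLinearMap₁₂.sum_apply_bateman_directions_eq_zero a b z
  simp only [ContinuousLinearMap.toLinearMap₁₂_apply_apply_apply] at hnull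
  simp only [hnull]
  simp [circleIntegral]

end NullDirections

/-- **Bateman's formula.** Let `f : ℂ × ℂ × ℂ → ℂ` be entire and define
`u (x₁, x₂, x₃, x₄) = ∮_{|z|=1} f (z, (x₁+ix₂)z + (x₃+ix₄), (−x₃+ix₄)z + (x₁−ix₂)) dz`.
Then `u` is harmonic on `ℝ⁴`: the sum of its four second partial derivatives vanishes. -/
theorem stmt_8 (f : ℂ × ℂ × ℂ → ℂ) (hf : Differentiable ℂ f)
    (u : ℝ → ℝ → ℝ → ℝ → ℂ)
    (hu : ∀ x₁ x₂ x₃ x₄ : ℝ, u x₁ x₂ x₃ x₄ =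
      ∮ z in C(0, 1), f (z, ((x₁ : ℂ) + Complex.I * (x₂ : ℂ)) * z + ((x₃ : ℂ) + Complex.I * (x₄ : ℂ)),
        (-(x₃ : ℂ) + Complex.I * (x₄ : ℂ)) * z + ((x₁ : ℂ) - Complex.I * (x₂ : ℂ))))
    (x₁ x₂ x₃ x₄ : ℝ) :
    deriv (fun t => deriv (fun t' => u t' x₂ x₃ x₄) t) x₁ +
      deriv (fun t => deriv (fun t' => u x₁ t' x₃ x₄) t) x₂ +
      deriv (fun t => deriv (fun t' => u x₁ x₂ t' x₄) t) x₃ +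
      deriv (fun t => deriv (fun t' => u x₁ x₂ x₃ t') t) x₄ = 0 := by
  have hf2 : ContDiff ℂ 2 f := hf.contDiff_of_finiteDimensional.of_le (by norm_cast)
  set P : ℂ → ℂ × ℂ × ℂ := fun z =>
    (z, ((x₁ : ℂ) + I * x₂) * z + (x₃ + I * x₄), (-(x₃ : ℂ) + I * x₄) * z + (x₁ - I * x₂))
  have hpartial (v : ℂ → ℂ × ℂ × ℂ) (hv : ContDiff ℝ 2 v) (x : ℝ) (g : ℝ → ℂ)
      (hg : ∀ t : ℝ, g t = ∮ z in C(0, 1), f (P z + ((t - x : ℝ) : ℂ) • v z)) :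
      deriv (fun t => deriv g t) x = ∮ z in C(0, 1), fderiv ℂ (fderiv ℂ f) (P z) (v z) (v z) := by
    have hg' : g = fun t : ℝ => ∮ z in C(0, 1), f ((P z - (x : ℂ) • v z) + (t : ℂ) • v z) := by
      funext t
      simp only [hg, ofReal_sub, sub_smul, sub_add_eq_add_sub, add_sub_assoc']
    rw [hg', hf2.deriv_deriv_circleIntegral_comp_add_ofReal_smul (by fun_prop) hv]
    simp only [sub_add_cancel]
  set e₂ : ℂ × ℂ × ℂ := (0, 1, 0)
  set e₃ : ℂ × ℂ × ℂ := (0, 0, 1)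
  rw [hpartial (fun z => z • e₂ + e₃) (by fun_prop) x₁ _ ?_,
    hpartial (fun z => I • (z • e₂ - e₃)) (by fun_prop) x₂ _ ?_,
    hpartial (fun z => e₂ - z • e₃) (by fun_prop) x₃ _ ?_,
    hpartial (fun z => I • (e₂ + z • e₃)) (by fun_prop) x₄ _ ?_]
  · exact circleIntegral_sum_bateman_directions_eq_zero
      (((hf2.fderiv_right (m := 1) le_rfl).continuous_fderiv one_ne_zero).comp (by fun_prop)) e₂ e₃
  all_goals
    intro t
    rw [hu]
    congr! 2 with z
    simp only [P, e₂, e₃, Prod.smul_mk, Prod.mk_add_mk, Prod.mk_sub_mk, smul_eq_mul]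
    push_cast
    ring_nf
end
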